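/- (Mass conservation of CNFP) Let 0 < ε ≤ 1, τ > 0, and let V^{n+1/2}_j, A^{n+1/2}_{1,j} ∈ ℝ for j = 0,…,N and n ≥ 0. Suppose the sequence of periodic grid functions Φⁿ (n ≥ 0) satisfies the CNFP scheme: iδ⁺_tΦⁿ_j = −iσ₁ (D^f_x Φ^{n+1/2})_j + σ₃ Φ^{n+1/2}_j + ε(V^{n+1/2}_j I₂ − A^{n+1/2}_{1,j}σ₁)Φ^{n+1/2}_j for all j = 0,…,N−1 and n ≥ 0. Then ‖Φⁿ‖_{l²} = ‖Φ⁰‖_{l²} for all n ≥ 0. -/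

import Mathlib

open Complex Matrix Finset

noncomputable section

/-- The Pauli matrix σ₁. -/
def σ1 : Matrix (Fin 2) (Fin 2) ℂ := !![0, 1; 1, 0]

/-- The Pauli matrix σ₃. -/
def σ3 : Matrix (Fin 2) (Fin 2) ℂ := !![1, 0; 0, -1]

/-- The index set 𝒯_N = {−N/2, …, N/2−1}. -/
def TN (N : ℕ) : Finset ℤ := Finset.Icc (-(N : ℤ) / 2) ((N : ℤ) / 2 - 1)

/-- The Fourier frequency μ_l = 2πl/(b−a); `bma` stands for b−a. -/
def μ (bma : ℝ) (l : ℤ) : ℝ := 2 * Real.pi * l / bma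

/-- The Fourier pseudospectral derivative of a periodic grid function:
(D^f_x U)_j = (i/N) ∑_{k=0}^{N−1} ∑_{l∈𝒯_N} μ_l e^{2i(j−k)lπ/N} U_k. -/
def Dfx (N : ℕ) (bma : ℝ) (U : ℤ → Fin 2 → ℂ) (j : ℤ) : Fin 2 → ℂ :=
  (Complex.I / (N : ℂ)) • ∑ k ∈ Finset.range N, ∑ l ∈ TN N,
    ((μ bma l : ℝ) : ℂ) •
      (Complex.exp (2 * Complex.I * ((j : ℂ) - (k : ℂ)) * (l : ℂ) * (Real.pi : ℂ) / (N : ℂ)) •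
        U (k : ℤ))

/-- The time average Φ^{n+1/2}. -/
def mid (Φ : ℕ → ℤ → Fin 2 → ℂ) (n : ℕ) (j : ℤ) : Fin 2 → ℂ :=
  (2 : ℂ)⁻¹ • (Φ (n + 1) j + Φ n j)

/-!
The scheme reads `i (Φⁿ⁺¹ - Φⁿ) / τ = H Φ^{n+1/2}` with `H = -iσ₁D^f_x + σ₃ + ε (V - A σ₁)`.
The kernel `K` of `D^f_x` satisfies `conj K_{jk} = -K_{kj}`, so `D^f_x` is skew-adjoint for the
discrete inner product and commutes with `σ₁`; hence `-iσ₁D^f_x` is self-adjoint, and the rest of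
`H` acts pointwise by Hermitian matrices. Therefore
`‖Φⁿ⁺¹‖² - ‖Φⁿ‖² = 2 Re ⟨Φⁿ⁺¹ - Φⁿ, Φ^{n+1/2}⟩ = -2τ Im ⟨H Φ^{n+1/2}, Φ^{n+1/2}⟩ = 0`.
-/

open ComplexConjugate

section GridInner

variable {ι : Type*} [Fintype ι] (N : ℕ)

def gridInner (U W : ℤ → ι → ℂ) : ℂ := ∑ j ∈ range N, star (U j) ⬝ᵥ W j

variable {N}

lemma conj_gridInner (U W : ℤ → ι → ℂ) : conj (gridInner N U W) = gridInner N W U := by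
  simp only [gridInner, map_sum]
  exact sum_congr rfl fun j _ => (star_dotProduct (W j) (U j)).symm

lemma re_gridInner_self (U : ℤ → ι → ℂ) :
    (gridInner N U U).re = ∑ j ∈ range N, ∑ i, ‖U j i‖ ^ 2 := by
  simp only [gridInner, dotProduct, Pi.star_apply, RCLike.star_def, Complex.conj_mul',
    Complex.re_sum]
  norm_cast

lemma gridInner_add_left (U U' W : ℤ → ι → ℂ) :
    gridInner N (U + U') W = gridInner N U W + gridInner N U' W := by
  simp only [gridInner, Pi.add_apply, star_add, add_dotProduct, sum_add_distrib]

lemma gridInner_add_right (U W W' : ℤ → ι → ℂ) :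
    gridInner N U (W + W') = gridInner N U W + gridInner N U W' := by
  simp only [gridInner, Pi.add_apply, dotProduct_add, sum_add_distrib]

lemma gridInner_smul_left (c : ℂ) (U W : ℤ → ι → ℂ) :
    gridInner N (c • U) W = conj c * gridInner N U W := by
  simp only [gridInner, Pi.smul_apply, star_smul, smul_dotProduct, mul_sum, smul_eq_mul,
    RCLike.star_def]

lemma gridInner_smul_right (c : ℂ) (U W : ℤ → ι → ℂ) :
    gridInner N U (c • W) = c * gridInner N U W := by
  simp only [gridInner, Pi.smul_apply, dotProduct_smul, mul_sum, smul_eq_mul]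

lemma re_gridInner_sub_add (U W : ℤ → ι → ℂ) :
    (gridInner N (U - W) (U + W)).re = (gridInner N U U).re - (gridInner N W W).re := by
  have hexpand : gridInner N (U - W) (U + W) =
      gridInner N U U - gridInner N W W + (gridInner N U W - conj (gridInner N U W)) := by
    rw [conj_gridInner]
    simp only [gridInner, Pi.sub_apply, Pi.add_apply, star_sub, sub_dotProduct, dotProduct_add,
      ← sum_sub_distrib, ← sum_add_distrib]
    exact sum_congr rfl fun j _ => by ring
  rw [hexpand, Complex.add_re, Complex.sub_re, Complex.sub_re, Complex.conj_re, sub_self,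
    add_zero]

lemma gridInner_mulVec_left {M : ℤ → Matrix ι ι ℂ} (hM : ∀ j, (M j).IsHermitian)
    (U W : ℤ → ι → ℂ) :
    gridInner N (fun j => M j *ᵥ U j) W = gridInner N U (fun j => M j *ᵥ W j) := by
  refine sum_congr rfl fun j _ => ?_
  rw [star_mulVec, dotProduct_mulVec, (hM j).eq]

lemma gridInner_sum_smul_left_eq_neg {K : ℤ → ℤ → ℂ} (hK : ∀ j k, conj (K j k) = -K k j)
    (U W : ℤ → ι → ℂ) :
    gridInner N (fun j => ∑ k ∈ range N, K j k • U k) W =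
      -gridInner N U (fun j => ∑ k ∈ range N, K j k • W k) := by
  simp only [gridInner, star_sum, star_smul, sum_dotProduct, dotProduct_sum, smul_dotProduct,
    dotProduct_smul, RCLike.star_def, hK, smul_eq_mul, ← sum_neg_distrib]
  rw [sum_comm]
  exact sum_congr rfl fun j _ => sum_congr rfl fun k _ => by ring

lemma im_gridInner_self_eq_zero {H : (ℤ → ι → ℂ) → ℤ → ι → ℂ}
    (hH : ∀ U W, gridInner N (H U) W = gridInner N U (H W)) (U : ℤ → ι → ℂ) :
    (gridInner N (H U) U).im = 0 := by
  rw [← Complex.conj_eq_iff_im, conj_gridInner, hH]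

theorem re_gridInner_self_eq_of_crankNicolson {H : (ℤ → ι → ℂ) → ℤ → ι → ℂ}
    (hH : ∀ U W, gridInner N (H U) W = gridInner N U (H W)) {τ : ℝ} (hτ : τ ≠ 0) {U U' : ℤ → ι → ℂ}
    (hstep : ∀ j, I • ((τ : ℂ)⁻¹ • (U' j - U j)) = H (fun j => (2 : ℂ)⁻¹ • (U' j + U j)) j) :
    (gridInner N U' U').re = (gridInner N U U).re := by
  set m : ℤ → ι → ℂ := fun j => (2 : ℂ)⁻¹ • (U' j + U j)
  have hinv : -(I * τ) * I * (τ : ℂ)⁻¹ = 1 := by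
    rw [mul_assoc, neg_mul, mul_mul_mul_comm, I_mul_I, mul_inv_cancel₀ (ofReal_ne_zero.mpr hτ)]
    norm_num
  have hdiff : U' - U = (-(I * τ)) • H m := funext fun j => by
    rw [Pi.smul_apply, ← hstep j, smul_smul, smul_smul, hinv, one_smul, Pi.sub_apply]
  have hsum : U' + U = (2 : ℂ) • m := funext fun j => by
    simp only [m, Pi.add_apply, Pi.smul_apply, smul_smul]
    norm_num
  rw [← sub_eq_zero, ← re_gridInner_sub_add, hdiff, hsum, gridInner_smul_left,
    gridInner_smul_right]
  simp [mul_re, im_gridInner_self_eq_zero hH m]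

end GridInner

def dfxKernel (N : ℕ) (bma : ℝ) (j k : ℤ) : ℂ :=
  I / N * ∑ l ∈ TN N, (μ bma l : ℂ) * exp (2 * I * (j - k) * l * Real.pi / N)

section Dfx

variable {N : ℕ} {bma : ℝ}

lemma Dfx_eq_sum_smul (U : ℤ → Fin 2 → ℂ) (j : ℤ) :
    Dfx N bma U j = ∑ k ∈ range N, dfxKernel N bma j k • U k := by
  simp only [Dfx, dfxKernel, smul_sum, smul_smul, mul_sum, sum_smul, Int.cast_natCast]

lemma conj_dfxKernel (j k : ℤ) : conj (dfxKernel N bma j k) = -dfxKernel N bma k j := by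
  simp only [dfxKernel, map_mul, map_div₀, map_sum, conj_I, map_natCast, conj_ofReal,
    ← exp_conj, map_ofNat, map_sub, map_intCast, mul_sum, ← sum_neg_distrib]
  exact sum_congr rfl fun l _ => by ring_nf

lemma Dfx_mulVec (M : Matrix (Fin 2) (Fin 2) ℂ) (U : ℤ → Fin 2 → ℂ) :
    Dfx N bma (fun k => M *ᵥ U k) = fun j => M *ᵥ Dfx N bma U j := by
  funext j
  simp only [Dfx_eq_sum_smul, mulVec_sum, mulVec_smul]

lemma gridInner_Dfx_left (U W : ℤ → Fin 2 → ℂ) :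
    gridInner N (Dfx N bma U) W = -gridInner N U (Dfx N bma W) := by
  rw [funext (Dfx_eq_sum_smul U), funext (Dfx_eq_sum_smul W)]
  exact gridInner_sum_smul_left_eq_neg conj_dfxKernel U W

end Dfx

lemma isHermitian_σ1 : σ1.IsHermitian := by
  ext i j
  fin_cases i <;> fin_cases j <;> simp [σ1]

lemma isHermitian_σ3 : σ3.IsHermitian := by
  ext i j
  fin_cases i <;> fin_cases j <;> simp [σ3]

def diracOp (N : ℕ) (bma ε : ℝ) (V A : ℤ → ℝ) (U : ℤ → Fin 2 → ℂ) (j : ℤ) : Fin 2 → ℂ :=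
  (-I) • σ1 *ᵥ Dfx N bma U j + σ3 *ᵥ U j +
    (ε : ℂ) • ((V j : ℂ) • U j - (A j : ℂ) • σ1 *ᵥ U j)

def potentialMatrix (ε : ℝ) (V A : ℤ → ℝ) (j : ℤ) : Matrix (Fin 2) (Fin 2) ℂ :=
  σ3 + ((ε * V j : ℝ) : ℂ) • 1 - ((ε * A j : ℝ) : ℂ) • σ1

lemma isHermitian_potentialMatrix (ε : ℝ) (V A : ℤ → ℝ) (j : ℤ) :
    (potentialMatrix ε V A j).IsHermitian :=
  (isHermitian_σ3.add (isHermitian_one.smul (conj_ofReal _))).sub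
    (isHermitian_σ1.smul (conj_ofReal _))

section DiracOp

variable {N : ℕ} {bma : ℝ}

lemma gridInner_neg_I_smul_σ1_Dfx_left (U W : ℤ → Fin 2 → ℂ) :
    gridInner N ((-I) • fun j => σ1 *ᵥ Dfx N bma U j) W =
      gridInner N U ((-I) • fun j => σ1 *ᵥ Dfx N bma W j) := by
  calc gridInner N ((-I) • fun j => σ1 *ᵥ Dfx N bma U j) W
      = I * gridInner N (Dfx N bma U) (fun j => σ1 *ᵥ W j) := by
        rw [gridInner_smul_left, gridInner_mulVec_left (fun _ => isHermitian_σ1), map_neg, conj_I,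
          neg_neg]
    _ = -I * gridInner N U (fun j => σ1 *ᵥ Dfx N bma W j) := by
        rw [gridInner_Dfx_left, Dfx_mulVec, neg_mul_comm]
    _ = gridInner N U ((-I) • fun j => σ1 *ᵥ Dfx N bma W j) := (gridInner_smul_right _ _ _).symm

lemma diracOp_eq_add (ε : ℝ) (V A : ℤ → ℝ) (U : ℤ → Fin 2 → ℂ) :
    diracOp N bma ε V A U =
      ((-I) • fun j => σ1 *ᵥ Dfx N bma U j) + fun j => potentialMatrix ε V A j *ᵥ U j := by
  funext j
  simp only [diracOp, potentialMatrix, Pi.add_apply, Pi.smul_apply, add_mulVec, sub_mulVec,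
    smul_mulVec, one_mulVec, ofReal_mul, smul_sub, mul_smul, add_assoc, add_sub_assoc]

lemma gridInner_diracOp_left (ε : ℝ) (V A : ℤ → ℝ) (U W : ℤ → Fin 2 → ℂ) :
    gridInner N (diracOp N bma ε V A U) W = gridInner N U (diracOp N bma ε V A W) := by
  rw [diracOp_eq_add, diracOp_eq_add, gridInner_add_left, gridInner_neg_I_smul_σ1_Dfx_left,
    gridInner_mulVec_left (isHermitian_potentialMatrix ε V A), gridInner_add_right]

end DiracOp

/-- `Vh n j` and `Ah n j` are the potential values `V^{n+1/2}_j` and `A^{n+1/2}_{1,j}`. -/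
theorem cnfp_mass_conservation_general (a b : ℝ) (N : ℕ) (h : ℝ) (τ ε : ℝ) (hτ : 0 < τ)
    (Vh Ah : ℕ → ℤ → ℝ)
    (Φ : ℕ → ℤ → Fin 2 → ℂ)
    (hscheme : ∀ n : ℕ, ∀ j : ℤ,
      Complex.I • ((τ : ℂ)⁻¹ • (Φ (n + 1) j - Φ n j)) =
        (-Complex.I) • σ1.mulVec (Dfx N (b - a) (mid Φ n) j) + σ3.mulVec (mid Φ n j) +
          (ε : ℂ) • (((Vh n j : ℝ) : ℂ) • mid Φ n j -
            ((Ah n j : ℝ) : ℂ) • σ1.mulVec (mid Φ n j))) :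
    ∀ n : ℕ, Real.sqrt (h * ∑ j ∈ Finset.range N, ∑ i, ‖Φ n (j : ℤ) i‖ ^ 2) =
      Real.sqrt (h * ∑ j ∈ Finset.range N, ∑ i, ‖Φ 0 (j : ℤ) i‖ ^ 2) := by
  have hmass : ∀ n, (gridInner N (Φ n) (Φ n)).re = (gridInner N (Φ 0) (Φ 0)).re := by
    intro n
    induction n with
    | zero => rfl
    | succ n ih =>
      exact (re_gridInner_self_eq_of_crankNicolson
        (gridInner_diracOp_left ε (Vh n) (Ah n)) hτ.ne' (hscheme n)).trans ih
  intro n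
  rw [← re_gridInner_self, ← re_gridInner_self, hmass n]

/-- Mass conservation of the Crank–Nicolson Fourier pseudospectral (CNFP)
method for the 1D Dirac equation.  Here `Vh n j` and `Ah n j` denote the
potential values `V^{n+1/2}_j` and `A^{n+1/2}_{1,j}`. -/
theorem cnfp_mass_conservation (a b : ℝ) (hab : a < b) (N : ℕ) (hN : 0 < N)
    (hNe : Even N) (h : ℝ) (hh : h = (b - a) / N)
    (τ ε : ℝ) (hτ : 0 < τ) (hε0 : 0 < ε) (hε1 : ε ≤ 1)
    (Vh Ah : ℕ → ℤ → ℝ)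
    (Φ : ℕ → ℤ → Fin 2 → ℂ)
    (hper : ∀ n : ℕ, ∀ j : ℤ, Φ n (j + N) = Φ n j)
    (hscheme : ∀ n : ℕ, ∀ j : ℤ,
      Complex.I • ((τ : ℂ)⁻¹ • (Φ (n + 1) j - Φ n j)) =
        (-Complex.I) • σ1.mulVec (Dfx N (b - a) (mid Φ n) j) + σ3.mulVec (mid Φ n j) +
          (ε : ℂ) • (((Vh n j : ℝ) : ℂ) • mid Φ n j -
            ((Ah n j : ℝ) : ℂ) • σ1.mulVec (mid Φ n j))) :
    ∀ n : ℕ, Real.sqrt (h * ∑ j ∈ Finset.range N, ∑ i, ‖Φ n (j : ℤ) i‖ ^ 2) =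
      Real.sqrt (h * ∑ j ∈ Finset.range N, ∑ i, ‖Φ 0 (j : ℤ) i‖ ^ 2) :=
  cnfp_mass_conservation_general a b N h τ ε hτ Vh Ah Φ hscheme

end
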